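/- Let E = [−1, −1/2) ∪ [1/2, 1) ⊂ ℝ (the Shannon wavelet set). For a real number A > 0, the condition Σ_{k∈ℤ} χ_E(A^{-1}(ξ+k)) ≤ 1 for almost every ξ holds if and only if A ∈ (0, 1/2] ∪ {1}. In particular: for A ≤ 1/2 the sum is at most 1 a.e.; for A = 1 the sum equals 1 a.e.; and for A ∈ (1/2, 1) the sum attains the value 2 on a set of positive measure; for A > 1 the sum exceeds 1 on a set of positive measure. -/

import Mathlib

open MeasureTheory ENNReal

noncomputable section

/-- The Shannon wavelet set `E = [−1, −1/2) ∪ [1/2, 1)`. -/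
def shannonSet : Set ℝ := Set.Ico (-1 : ℝ) (-(1/2)) ∪ Set.Ico (1/2 : ℝ) 1

/-- The periodized sum `Σ_{k∈ℤ} χ_E(A^{-1}(ξ+k))`. -/
def shannonSum (A ξ : ℝ) : ℝ≥0∞ :=
  ∑' k : ℤ, shannonSet.indicator (fun _ => (1 : ℝ≥0∞)) (A⁻¹ * (ξ + (k : ℝ)))

lemma mem_shannon_iff {A : ℝ} (hA : 0 < A) (x : ℝ) :
    A⁻¹ * x ∈ shannonSet ↔ (-A ≤ x ∧ x < -(A/2)) ∨ (A/2 ≤ x ∧ x < A) := by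
  rw [shannonSet, Set.mem_union, Set.mem_Ico, Set.mem_Ico, inv_mul_eq_div,
    le_div_iff₀ hA, div_lt_iff₀ hA, le_div_iff₀ hA, div_lt_iff₀ hA]
  constructor
  · rintro (⟨h1, h2⟩ | ⟨h1, h2⟩)
    · exact Or.inl ⟨by linarith, by linarith⟩
    · exact Or.inr ⟨by linarith, by linarith⟩
  · rintro (⟨h1, h2⟩ | ⟨h1, h2⟩)
    · exact Or.inl ⟨by linarith, by linarith⟩
    · exact Or.inr ⟨by linarith, by linarith⟩

lemma tsum_le_one_of_subsingleton (f : ℤ → ℝ≥0∞) (hle : ∀ k, f k ≤ 1)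
    (huniq : ∀ a b, f a ≠ 0 → f b ≠ 0 → a = b) : ∑' k, f k ≤ 1 := by
  by_cases hex : ∃ k, f k ≠ 0
  · obtain ⟨k0, hk0⟩ := hex
    rw [tsum_eq_single k0 (fun b hb => by
      by_contra hb0
      exact hb (huniq b k0 hb0 hk0))]
    exact hle k0
  · push_neg at hex
    simp [hex]

lemma two_le_tsum (f : ℤ → ℝ≥0∞) (a b : ℤ) (hab : a ≠ b) (ha : f a = 1) (hb : f b = 1) :
    2 ≤ ∑' k, f k := by
  have h := ENNReal.sum_le_tsum (f := f) ({a, b} : Finset ℤ)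
  rwa [Finset.sum_pair hab, ha, hb, one_add_one_eq_two] at h

lemma shannon_le (A : ℝ) (hA : 0 < A) (h2 : A ≤ 1/2) (ξ : ℝ) : shannonSum A ξ ≤ 1 := by
  apply tsum_le_one_of_subsingleton
  · intro k
    by_cases h : A⁻¹ * (ξ + (k : ℝ)) ∈ shannonSet
    · rw [Set.indicator_of_mem h]
    · rw [Set.indicator_of_notMem h]; exact zero_le
  · intro a b ha hb
    have ha' : A⁻¹ * (ξ + (a : ℝ)) ∈ shannonSet := by
      by_contra h; exact ha (Set.indicator_of_notMem h _)
    have hb' : A⁻¹ * (ξ + (b : ℝ)) ∈ shannonSet := by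
      by_contra h; exact hb (Set.indicator_of_notMem h _)
    rw [mem_shannon_iff hA] at ha' hb'
    have hA1 : -A ≤ ξ + a ∧ ξ + (a : ℝ) < A := by
      rcases ha' with ⟨u, v⟩ | ⟨u, v⟩ <;> exact ⟨by linarith, by linarith⟩
    have hB1 : -A ≤ ξ + b ∧ ξ + (b : ℝ) < A := by
      rcases hb' with ⟨u, v⟩ | ⟨u, v⟩ <;> exact ⟨by linarith, by linarith⟩
    have h1 : (a - b : ℤ) < 1 := by
      have : ((a - b : ℤ) : ℝ) < 1 := by push_cast; linarith [hA1.2, hB1.1]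
      exact_mod_cast this
    have h2 : (-1 : ℤ) < a - b := by
      have : (-1 : ℝ) < ((a - b : ℤ) : ℝ) := by push_cast; linarith [hA1.1, hB1.2]
      exact_mod_cast this
    omega

lemma shannon_eq_one (ξ : ℝ) : shannonSum 1 ξ = 1 := by
  classical
  have ht0 : 0 ≤ Int.fract ξ := Int.fract_nonneg ξ
  have ht1 : Int.fract ξ < 1 := Int.fract_lt_one ξ
  have hft : (⌊ξ⌋ : ℝ) + Int.fract ξ = ξ := Int.floor_add_fract ξ
  set k0 : ℤ := if Int.fract ξ < 1/2 then -⌊ξ⌋ - 1 else -⌊ξ⌋ with hk0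
  have key : ∀ k : ℤ, (1 : ℝ)⁻¹ * (ξ + (k : ℝ)) ∈ shannonSet ↔ k = k0 := by
    intro k
    rw [mem_shannon_iff one_pos]
    constructor
    · rintro (⟨h1, h2⟩ | ⟨h1, h2⟩)
      · -- ξ + k ∈ [-1, -1/2)
        have hm1 : (-2 : ℤ) < ⌊ξ⌋ + k := by
          have : (-2 : ℝ) < ((⌊ξ⌋ + k : ℤ) : ℝ) := by push_cast; linarith
          exact_mod_cast this
        have hm2 : ⌊ξ⌋ + k < 0 := by
          have : ((⌊ξ⌋ + k : ℤ) : ℝ) < 0 := by push_cast; linarith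
          exact_mod_cast this
        have hm : ⌊ξ⌋ + k = -1 := by omega
        have hmr : (k : ℝ) = -(⌊ξ⌋ : ℝ) - 1 := by
          have : ((⌊ξ⌋ + k : ℤ) : ℝ) = -1 := by exact_mod_cast hm
          push_cast at this; linarith
        have hfrac : Int.fract ξ < 1/2 := by
          have := h2; rw [← hft] at this; linarith [hmr]
        rw [hk0, if_pos hfrac]; omega
      · -- ξ + k ∈ [1/2, 1)
        have hm1 : (-1 : ℤ) < ⌊ξ⌋ + k := by
          have : (-1 : ℝ) < ((⌊ξ⌋ + k : ℤ) : ℝ) := by push_cast; linarith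
          exact_mod_cast this
        have hm2 : ⌊ξ⌋ + k < 1 := by
          have : ((⌊ξ⌋ + k : ℤ) : ℝ) < 1 := by push_cast; linarith
          exact_mod_cast this
        have hm : ⌊ξ⌋ + k = 0 := by omega
        have hmr : (k : ℝ) = -(⌊ξ⌋ : ℝ) := by
          have : ((⌊ξ⌋ + k : ℤ) : ℝ) = 0 := by exact_mod_cast hm
          push_cast at this; linarith
        have hfrac : ¬ Int.fract ξ < 1/2 := by
          have := h1; rw [← hft] at this
          intro hc; linarith [hmr]
        rw [hk0, if_neg hfrac]; omega
    · rintro rfl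
      by_cases hc : Int.fract ξ < 1/2
      · rw [hk0, if_pos hc]
        left
        push_cast
        constructor <;> [linarith; linarith]
      · rw [hk0, if_neg hc]
        push_neg at hc
        right
        push_cast
        constructor <;> [linarith; linarith]
  rw [shannonSum]
  rw [tsum_eq_single k0 (fun b hb => Set.indicator_of_notMem (fun h => hb ((key b).mp h)) _)]
  rw [Set.indicator_of_mem ((key k0).mpr rfl)]

lemma shannon_two (A : ℝ) (hA : A ∈ Set.Ioo (1/2 : ℝ) 1) :
    0 < volume {ξ : ℝ | shannonSum A ξ = 2} := by
  obtain ⟨hA1, hA2⟩ := hA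
  have hA0 : 0 < A := by linarith
  set l : ℝ := max (-A) (A/2 - 1) with hl
  set r : ℝ := min (-(A/2)) (A - 1) with hr
  have hlr : l < r := by
    apply max_lt <;> apply lt_min <;> linarith
  have hsub : Set.Ico l r ⊆ {ξ : ℝ | shannonSum A ξ = 2} := by
    rintro ξ ⟨hξl, hξr⟩
    have hl1 : -A ≤ ξ := le_trans (le_max_left _ _) hξl
    have hl2 : A/2 - 1 ≤ ξ := le_trans (le_max_right _ _) hξl
    have hr1 : ξ < -(A/2) := lt_of_lt_of_le hξr (min_le_left _ _)
    have hr2 : ξ < A - 1 := lt_of_lt_of_le hξr (min_le_right _ _)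
    have h0 : A⁻¹ * (ξ + ((0 : ℤ) : ℝ)) ∈ shannonSet := by
      rw [mem_shannon_iff hA0]; push_cast
      exact Or.inl ⟨by linarith, by linarith⟩
    have h1 : A⁻¹ * (ξ + ((1 : ℤ) : ℝ)) ∈ shannonSet := by
      rw [mem_shannon_iff hA0]; push_cast
      exact Or.inr ⟨by linarith, by linarith⟩
    have honly : ∀ k : ℤ, A⁻¹ * (ξ + (k : ℝ)) ∈ shannonSet → k = 0 ∨ k = 1 := by
      intro k hk
      rw [mem_shannon_iff hA0] at hk
      have hb : -A ≤ ξ + (k : ℝ) ∧ ξ + (k : ℝ) < A := by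
        rcases hk with ⟨u, v⟩ | ⟨u, v⟩ <;> exact ⟨by linarith, by linarith⟩
      have hk1 : (-1 : ℤ) < k := by
        have : (-1 : ℝ) < (k : ℝ) := by linarith [hb.1]
        exact_mod_cast this
      have hk2 : k < 2 := by
        have : (k : ℝ) < 2 := by linarith [hb.2]
        exact_mod_cast this
      omega
    show shannonSum A ξ = 2
    rw [shannonSum, tsum_eq_sum (s := ({0, 1} : Finset ℤ)) (fun k hk => by
      apply Set.indicator_of_notMem
      intro hmem
      rcases honly k hmem with rfl | rfl <;> simp at hk)]
    rw [Finset.sum_pair (by decide : (0 : ℤ) ≠ 1),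
      Set.indicator_of_mem h0, Set.indicator_of_mem h1, one_add_one_eq_two]
  calc (0 : ℝ≥0∞) < volume (Set.Ico l r) := by
        rw [Real.volume_Ico]; exact ENNReal.ofReal_pos.mpr (by linarith)
    _ ≤ volume {ξ : ℝ | shannonSum A ξ = 2} := measure_mono hsub

lemma shannon_gt (A : ℝ) (hA : 1 < A) : 0 < volume {ξ : ℝ | 1 < shannonSum A ξ} := by
  have hA0 : 0 < A := by linarith
  set n : ℤ := ⌊A⌋ + 1 with hn
  have hn1 : A < (n : ℝ) := by
    rw [hn]; push_cast; exact Int.lt_floor_add_one A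
  have hn2 : (n : ℝ) < 2 * A := by
    rw [hn]; push_cast; linarith [Int.floor_le A]
  have hn0 : (0 : ℤ) ≠ n := by
    have : (0 : ℝ) < (n : ℝ) := by linarith
    have : (0 : ℤ) < n := by exact_mod_cast this
    omega
  set l : ℝ := max (-A) (A/2 - n) with hl
  set r : ℝ := min (-(A/2)) (A - n) with hr
  have hlr : l < r := by
    apply max_lt <;> apply lt_min <;> linarith
  have hsub : Set.Ico l r ⊆ {ξ : ℝ | 1 < shannonSum A ξ} := by
    rintro ξ ⟨hξl, hξr⟩
    have hl1 : -A ≤ ξ := le_trans (le_max_left _ _) hξl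
    have hl2 : A/2 - n ≤ ξ := le_trans (le_max_right _ _) hξl
    have hr1 : ξ < -(A/2) := lt_of_lt_of_le hξr (min_le_left _ _)
    have hr2 : ξ < A - n := lt_of_lt_of_le hξr (min_le_right _ _)
    have h0 : A⁻¹ * (ξ + ((0 : ℤ) : ℝ)) ∈ shannonSet := by
      rw [mem_shannon_iff hA0]; push_cast
      exact Or.inl ⟨by linarith, by linarith⟩
    have h1 : A⁻¹ * (ξ + ((n : ℤ) : ℝ)) ∈ shannonSet := by
      rw [mem_shannon_iff hA0]
      exact Or.inr ⟨by linarith, by linarith⟩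
    show 1 < shannonSum A ξ
    have h2 : (2 : ℝ≥0∞) ≤ shannonSum A ξ := by
      rw [shannonSum]
      exact two_le_tsum _ 0 n hn0
        (by rw [Set.indicator_of_mem h0]) (by rw [Set.indicator_of_mem h1])
    exact lt_of_lt_of_le one_lt_two h2
  calc (0 : ℝ≥0∞) < volume (Set.Ico l r) := by
        rw [Real.volume_Ico]; exact ENNReal.ofReal_pos.mpr (by linarith)
    _ ≤ volume {ξ : ℝ | 1 < shannonSum A ξ} := measure_mono hsub

/-- For `A > 0`, the sampling condition
`Σ_k χ_E(A^{-1}(ξ+k)) ≤ 1 a.e.` for the Shannon wavelet set `E = [−1,−1/2) ∪ [1/2,1)`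
holds iff `A ∈ (0, 1/2] ∪ {1}`; in particular the sum is `≤ 1` a.e. for `A ≤ 1/2`,
`= 1` a.e. for `A = 1`, attains `2` on a set of positive measure for `A ∈ (1/2, 1)`,
and exceeds `1` on a set of positive measure for `A > 1`. -/
theorem stmt14 (A : ℝ) (hA : 0 < A) :
    ((∀ᵐ ξ : ℝ, shannonSum A ξ ≤ 1) ↔ A ∈ Set.Ioc (0 : ℝ) (1/2) ∪ {(1 : ℝ)}) ∧
    (A ≤ 1/2 → ∀ᵐ ξ : ℝ, shannonSum A ξ ≤ 1) ∧
    (A = 1 → ∀ᵐ ξ : ℝ, shannonSum A ξ = 1) ∧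
    (A ∈ Set.Ioo (1/2 : ℝ) 1 → 0 < volume {ξ : ℝ | shannonSum A ξ = 2}) ∧
    (1 < A → 0 < volume {ξ : ℝ | 1 < shannonSum A ξ}) := by
  refine ⟨?_, fun h => Filter.Eventually.of_forall (shannon_le A hA h),
    fun h => Filter.Eventually.of_forall (by subst h; exact shannon_eq_one),
    shannon_two A, shannon_gt A⟩
  constructor
  · intro h
    by_contra hmem
    have h1 : ¬ A ≤ 1/2 := fun hc => hmem (Or.inl ⟨hA, hc⟩)
    have h2 : A ≠ 1 := fun hc => hmem (Or.inr (Set.mem_singleton_iff.mpr hc))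
    push_neg at h1
    rw [ae_iff] at h
    rcases lt_trichotomy A 1 with hc | hc | hc
    · have hpos := shannon_two A ⟨h1, hc⟩
      have hsub : {ξ : ℝ | shannonSum A ξ = 2} ⊆ {ξ : ℝ | ¬ shannonSum A ξ ≤ 1} := by
        intro ξ hξ
        simp only [Set.mem_setOf_eq] at hξ ⊢
        rw [hξ]
        exact not_le.mpr one_lt_two
      exact hpos.not_ge ((measure_mono hsub).trans h.le)
    · exact h2 hc
    · have hpos := shannon_gt A hc
      have hsub : {ξ : ℝ | 1 < shannonSum A ξ} ⊆ {ξ : ℝ | ¬ shannonSum A ξ ≤ 1} := by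
        intro ξ hξ
        simp only [Set.mem_setOf_eq] at hξ ⊢
        exact not_le.mpr hξ
      exact hpos.not_ge ((measure_mono hsub).trans h.le)
  · rintro (⟨h0, hle⟩ | h1)
    · exact Filter.Eventually.of_forall (shannon_le A hA hle)
    · have : A = 1 := h1
      subst this
      exact Filter.Eventually.of_forall (fun ξ => (shannon_eq_one ξ).le)

end
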